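/- arXiv:1611.00817 — 2 statements merged into one kernel-verified Lean document; each statement's English description precedes it below -/
import Mathlib

section
/- Let (X,Y) be a centred bivariate Gaussian vector with Var(X) = Var(Y) = κ₀ and Cov(X,Y) = κ₁, where 0 ≤ κ₁ < κ₀. Then for the logistic sigmoid σ, E[σ(X)σ(Y)] ≤ ((κ₀+κ₁)/(κ₀-κ₁))^{1/2} · E[σ(Z)]², where Z ~ N(0, κ₀). -/
open MeasureTheory ProbabilityTheory Real
open scoped NNReal

/-!
Since `xy ≤ (x² + y²)/2` and `κ₁ ≥ 0`, the joint density of `(X, Y)` is at most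
`√((κ₀ + κ₁)/(κ₀ - κ₁))` times the product of two `N(0, κ₀ + κ₁)` densities. Integrating
against `σ(x)σ(y)` leaves `E[σ(N(0, κ₀ + κ₁))]²`, and `E[σ(N(0, v))] = 1/2` for every `v > 0`
because `σ(x) + σ(-x) = 1` and the Gaussian density is even; so this square equals `E[σ(Z)]²`.
-/

theorem integral_mul_eq_half_of_add_neg_eq_one {G : Type*} [MeasurableSpace G] [AddGroup G]
    [MeasurableNeg G] {μ : Measure G} [μ.IsNegInvariant] {g h : G → ℝ}
    (hg : ∀ x, g (-x) = g x) (hh : ∀ x, h x + h (-x) = 1)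
    (hhg : Integrable (fun x ↦ h x * g x) μ) :
    ∫ x, h x * g x ∂μ = (∫ x, g x ∂μ) / 2 := by
  have h_reflect : ∫ x, h (-x) * g x ∂μ = ∫ x, h x * g x ∂μ := by
    simpa only [hg] using integral_neg_eq_self (fun x ↦ h x * g x) μ
  have h_split : ∫ x, g x ∂μ = ∫ x, h x * g x ∂μ + ∫ x, h (-x) * g x ∂μ := by
    rw [← integral_add hhg (by simpa only [hg] using hhg.comp_neg)]
    congr with x
    linear_combination -(hh x) * g x
  linarith

lemma gaussianPDFReal_zero_neg (v : ℝ≥0) (x : ℝ) :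
    gaussianPDFReal 0 v (-x) = gaussianPDFReal 0 v x := by
  simp [gaussianPDFReal]

lemma integrable_sigmoid_mul_gaussianPDFReal (m : ℝ) (v : ℝ≥0) :
    Integrable (fun x ↦ sigmoid x * gaussianPDFReal m v x) :=
  (integrable_gaussianPDFReal m v).bdd_mul continuous_sigmoid.aestronglyMeasurable (c := 1)
    (ae_of_all _ fun x ↦ by rw [norm_of_nonneg (sigmoid_nonneg x)]; exact sigmoid_le_one x)

lemma integral_sigmoid_mul_gaussianPDFReal {v : ℝ≥0} (hv : v ≠ 0) :
    ∫ x, sigmoid x * gaussianPDFReal 0 v x = 1 / 2 := by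
  rw [integral_mul_eq_half_of_add_neg_eq_one (gaussianPDFReal_zero_neg v)
    (fun x ↦ by rw [sigmoid_neg]; ring) (integrable_sigmoid_mul_gaussianPDFReal 0 v),
    integral_gaussianPDFReal_eq_one 0 hv]

theorem integral_integral_le_mul_sq_of_le_mul {α : Type*} [MeasurableSpace α] {μ : Measure α}
    {f : α → α → ℝ} {g h : α → ℝ} {C : ℝ} (hh : ∀ x, 0 ≤ h x)
    (hhg : Integrable (fun x ↦ h x * g x) μ) (hf : ∀ x y, 0 ≤ f x y)
    (hfg : ∀ x y, f x y ≤ C * (g x * g y)) :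
    ∫ x, ∫ y, h x * h y * f x y ∂μ ∂μ ≤ C * (∫ x, h x * g x ∂μ) ^ 2 := by
  set I := ∫ x, h x * g x ∂μ
  have h_inner (x : α) : ∫ y, h x * h y * f x y ∂μ ≤ C * (h x * g x) * I := by
    rw [← integral_const_mul]
    refine integral_mono_of_nonneg (ae_of_all _ fun y ↦ by positivity [hh x, hh y, hf x y])
      (hhg.const_mul _) (ae_of_all _ fun y ↦ ?_)
    calc h x * h y * f x y ≤ h x * h y * (C * (g x * g y)) :=
          mul_le_mul_of_nonneg_left (hfg x y) (mul_nonneg (hh x) (hh y))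
      _ = C * (h x * g x) * (h y * g y) := by ring
  calc ∫ x, ∫ y, h x * h y * f x y ∂μ ∂μ ≤ ∫ x, C * (h x * g x) * I ∂μ :=
        integral_mono_of_nonneg
          (ae_of_all _ fun x ↦ integral_nonneg fun y ↦ by positivity [hh x, hh y, hf x y])
          ((hhg.const_mul C).mul_const I) (ae_of_all _ h_inner)
    _ = C * I ^ 2 := by rw [integral_mul_const, integral_const_mul]; ring

section Bivariate

variable {κ₀ κ₁ : ℝ}

lemma sq_add_sq_div_le_bivariate_exponent (hκ₁ : 0 ≤ κ₁) (hκ : κ₁ < κ₀) (x y : ℝ) :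
    (x ^ 2 + y ^ 2) / (2 * (κ₀ + κ₁)) ≤
      (κ₀ * (x ^ 2 + y ^ 2) - 2 * κ₁ * x * y) / (2 * (κ₀ ^ 2 - κ₁ ^ 2)) := by
  have h_sub : 0 < κ₀ - κ₁ := by linarith
  have h_add : 0 < κ₀ + κ₁ := by linarith
  rw [div_le_div_iff₀ (by positivity) (by nlinarith)]
  -- `κ₀(x² + y²) - 2κ₁xy - (κ₀ - κ₁)(x² + y²) = κ₁(x - y)² ≥ 0`
  nlinarith [mul_nonneg (mul_nonneg hκ₁ h_add.le) (sq_nonneg (x - y))]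

lemma bivariate_normalizer_eq (hκ₁ : 0 ≤ κ₁) (hκ : κ₁ < κ₀) :
    (2 * π * √(κ₀ ^ 2 - κ₁ ^ 2))⁻¹ =
      √((κ₀ + κ₁) / (κ₀ - κ₁)) * ((√(2 * π * (κ₀ + κ₁)))⁻¹ * (√(2 * π * (κ₀ + κ₁)))⁻¹) := by
  have h_sub : 0 < κ₀ - κ₁ := by linarith
  have h_add : 0 < κ₀ + κ₁ := by linarith
  rw [← mul_inv, mul_self_sqrt (by positivity), sq_sub_sq, sqrt_mul h_add.le, sqrt_div h_add.le]
  have := sqrt_pos.2 h_sub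
  have := pi_pos
  field_simp
  rw [sq_sqrt h_add.le]

lemma bivariate_density_le_mul_gaussianPDFReal (hκ₁ : 0 ≤ κ₁) (hκ : κ₁ < κ₀) (x y : ℝ) :
    (2 * π * √(κ₀ ^ 2 - κ₁ ^ 2))⁻¹ *
        exp (-((κ₀ * (x ^ 2 + y ^ 2) - 2 * κ₁ * x * y) / (2 * (κ₀ ^ 2 - κ₁ ^ 2)))) ≤
      √((κ₀ + κ₁) / (κ₀ - κ₁)) *
        (gaussianPDFReal 0 (κ₀ + κ₁).toNNReal x * gaussianPDFReal 0 (κ₀ + κ₁).toNNReal y) := by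
  have h_add : 0 ≤ κ₀ + κ₁ := by linarith
  have h_exp : exp (-((κ₀ * (x ^ 2 + y ^ 2) - 2 * κ₁ * x * y) / (2 * (κ₀ ^ 2 - κ₁ ^ 2)))) ≤
      exp (-x ^ 2 / (2 * (κ₀ + κ₁))) * exp (-y ^ 2 / (2 * (κ₀ + κ₁))) := by
    rw [← exp_add, exp_le_exp]
    have := sq_add_sq_div_le_bivariate_exponent hκ₁ hκ x y
    rw [add_div] at this
    linarith [neg_div (2 * (κ₀ + κ₁)) (x ^ 2), neg_div (2 * (κ₀ + κ₁)) (y ^ 2)]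
  calc _ ≤ (2 * π * √(κ₀ ^ 2 - κ₁ ^ 2))⁻¹ *
        (exp (-x ^ 2 / (2 * (κ₀ + κ₁))) * exp (-y ^ 2 / (2 * (κ₀ + κ₁)))) := by gcongr
    _ = _ := by
      rw [bivariate_normalizer_eq hκ₁ hκ]
      simp only [gaussianPDFReal, coe_toNNReal _ h_add, sub_zero]
      ring

end Bivariate

/-- For a centred bivariate Gaussian `(X,Y)` with common variance `κ₀` and covariance
`κ₁`, `0 ≤ κ₁ < κ₀`, expressed via its explicit joint density, one has
`E[σ(X)σ(Y)] ≤ ((κ₀+κ₁)/(κ₀-κ₁))^(1/2) E[σ(Z)]²` with `Z ~ N(0,κ₀)`. -/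
theorem sigmoid_product_gaussian_bound
    (σ : ℝ → ℝ) (hσ : ∀ x, σ x = (1 + Real.exp (-x))⁻¹)
    (κ₀ κ₁ : ℝ) (hκ₁ : 0 ≤ κ₁) (hκ : κ₁ < κ₀)
    (f : ℝ → ℝ → ℝ)
    (hf : ∀ x y, f x y = (2 * π * Real.sqrt (κ₀ ^ 2 - κ₁ ^ 2))⁻¹ *
      Real.exp (-((κ₀ * (x ^ 2 + y ^ 2) - 2 * κ₁ * x * y) / (2 * (κ₀ ^ 2 - κ₁ ^ 2)))))
    (φ : ℝ → ℝ)
    (hφ : ∀ z, φ z = (Real.sqrt (2 * π * κ₀))⁻¹ * Real.exp (-(z ^ 2 / (2 * κ₀)))) :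
    ∫ x : ℝ, ∫ y : ℝ, σ x * σ y * f x y ≤
      ((κ₀ + κ₁) / (κ₀ - κ₁)) ^ ((1:ℝ)/2) * (∫ z : ℝ, σ z * φ z) ^ 2 := by
  obtain rfl : σ = sigmoid := funext hσ
  obtain rfl : φ = gaussianPDFReal 0 κ₀.toNNReal := funext fun z ↦ by
    rw [hφ, gaussianPDFReal, coe_toNNReal _ (by linarith), sub_zero, neg_div]
  calc ∫ x, ∫ y, sigmoid x * sigmoid y * f x y
      ≤ √((κ₀ + κ₁) / (κ₀ - κ₁)) *
          (∫ x, sigmoid x * gaussianPDFReal 0 (κ₀ + κ₁).toNNReal x) ^ 2 :=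
        integral_integral_le_mul_sq_of_le_mul sigmoid_nonneg
          (integrable_sigmoid_mul_gaussianPDFReal 0 _) (fun x y ↦ by rw [hf]; positivity)
          (fun x y ↦ hf x y ▸ bivariate_density_le_mul_gaussianPDFReal hκ₁ hκ x y)
    _ = _ := by
      rw [integral_sigmoid_mul_gaussianPDFReal (toNNReal_pos.2 (by linarith)).ne',
        integral_sigmoid_mul_gaussianPDFReal (toNNReal_pos.2 (by linarith)).ne', sqrt_eq_rpow]
end

section
/- Let (X,Y) be a centred bivariate Gaussian vector with Var(X) = Var(Y) = κ(0) and Cov(X,Y) = κ(d) for some d with 0 ≤ κ(d) ≤ κ(1) < κ(0). Then Cov(σ(X), σ(Y)) ≤ 2 κ(d) E[σ(X)]² / (κ(0) - κ(1)). -/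
/-!
By the symmetry `σ (-x) = 1 - σ x`, `E σ(X) = 1/2`. Since `2 κd x y ≤ κd (x² + y²)`, the joint
density is dominated by `(2π √(κ0² - κd²))⁻¹` times a product of two centred Gaussian kernels of
variance `κ0 + κd`, which gives `E[σ(X) σ(Y)] ≤ (κ0 + κd) / (4 √(κ0² - κd²))`; this exceeds `1/4`
by at most `κd / (2 (κ0 - κ1))`.
-/

open MeasureTheory Real

namespace Real

lemma integrable_sigmoid_mul {h : ℝ → ℝ} (hh : Integrable h) :
    Integrable fun x => sigmoid x * h x :=
  hh.bdd_mul continuous_sigmoid.aestronglyMeasurable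
    (.of_forall fun x => by
      rw [norm_of_nonneg (sigmoid_nonneg x)]; exact sigmoid_le_one x)

/-- Since `sigmoid (-x) = 1 - sigmoid x`, reflecting the integral gives `I = ∫ h - I`. -/
lemma integral_sigmoid_mul_of_even {h : ℝ → ℝ} (hh : Integrable h) (heven : ∀ x, h (-x) = h x) :
    ∫ x, sigmoid x * h x = (∫ x, h x) / 2 := by
  have hrefl : ∫ x, sigmoid (-x) * h (-x) = (∫ x, h x) - ∫ x, sigmoid x * h x := by
    rw [← integral_sub hh (integrable_sigmoid_mul hh)]
    congr 1 with x
    rw [sigmoid_neg, heven]; ring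
  linarith [integral_neg_eq_self (fun x => sigmoid x * h x) volume]

end Real

lemma exp_neg_sq_div_eq (s x : ℝ) : exp (-(x ^ 2 / (2 * s))) = exp (-(2 * s)⁻¹ * x ^ 2) := by
  ring_nf

lemma integrable_exp_neg_sq_div {s : ℝ} (hs : 0 < s) :
    Integrable fun x : ℝ => exp (-(x ^ 2 / (2 * s))) := by
  simpa only [exp_neg_sq_div_eq] using integrable_exp_neg_mul_sq (by positivity : 0 < (2 * s)⁻¹)

lemma integral_exp_neg_sq_div {s : ℝ} (hs : 0 < s) :
    ∫ x : ℝ, exp (-(x ^ 2 / (2 * s))) = √(2 * π * s) := by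
  simp only [exp_neg_sq_div_eq, integral_gaussian]
  congr 1
  field_simp

lemma integral_sigmoid_mul_exp_neg_sq_div {s : ℝ} (hs : 0 < s) :
    ∫ x : ℝ, sigmoid x * exp (-(x ^ 2 / (2 * s))) = √(2 * π * s) / 2 := by
  rw [integral_sigmoid_mul_of_even (integrable_exp_neg_sq_div hs) (fun x => by rw [neg_sq]),
    integral_exp_neg_sq_div hs]

lemma integral_integral_le_integral_mul_integral {F : ℝ → ℝ → ℝ} {g h : ℝ → ℝ}
    (hF : ∀ x y, 0 ≤ F x y) (hFgh : ∀ x y, F x y ≤ g x * h y)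
    (hg : Integrable g) (hh : Integrable h) :
    ∫ x, ∫ y, F x y ≤ (∫ x, g x) * ∫ y, h y := by
  have inner (x : ℝ) : ∫ y, F x y ≤ g x * ∫ y, h y := by
    rw [← integral_const_mul]
    exact integral_mono_of_nonneg (.of_forall (hF x)) (hh.const_mul _) (.of_forall (hFgh x))
  rw [← integral_mul_const]
  exact integral_mono_of_nonneg (.of_forall fun x => integral_nonneg (hF x))
    (hg.mul_const _) (.of_forall inner)

/-- Density of a centred Gaussian pair with common variance `v` and covariance `c`. -/
noncomputable def centeredBivariateGaussianPDF (v c x y : ℝ) : ℝ :=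
  (2 * π * √(v ^ 2 - c ^ 2))⁻¹ *
    exp (-((v * (x ^ 2 + y ^ 2) - 2 * c * x * y) / (2 * (v ^ 2 - c ^ 2))))

/-- `2 c x y ≤ c (x² + y²)` and `(v - c) / (v² - c²) = 1 / (v + c)`. -/
lemma centeredBivariateGaussianPDF_le {v c : ℝ} (hc : 0 ≤ c) (hcv : c < v) (x y : ℝ) :
    centeredBivariateGaussianPDF v c x y ≤ (2 * π * √(v ^ 2 - c ^ 2))⁻¹ *
      (exp (-(x ^ 2 / (2 * (v + c)))) * exp (-(y ^ 2 / (2 * (v + c))))) := by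
  have hvc : 0 < v + c := by linarith
  have hD : 0 < v ^ 2 - c ^ 2 := by nlinarith
  have hform : (v - c) * (x ^ 2 + y ^ 2) ≤ v * (x ^ 2 + y ^ 2) - 2 * c * x * y := by
    nlinarith [mul_nonneg hc (sq_nonneg (x - y))]
  rw [centeredBivariateGaussianPDF, ← exp_add]
  gcongr
  calc -(x ^ 2 / (2 * (v + c))) + -(y ^ 2 / (2 * (v + c)))
      = -((v - c) * (x ^ 2 + y ^ 2) / (2 * (v ^ 2 - c ^ 2))) := by
        field_simp; ring
    _ ≥ _ := by gcongr

lemma integral_integral_sigmoid_mul_sigmoid_mul_centeredBivariateGaussianPDF_le {v c : ℝ}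
    (hc : 0 ≤ c) (hcv : c < v) :
    ∫ x, ∫ y, sigmoid x * sigmoid y * centeredBivariateGaussianPDF v c x y ≤
      (v + c) / (4 * √(v ^ 2 - c ^ 2)) := by
  set r := √(v ^ 2 - c ^ 2)
  have hr : 0 < r := sqrt_pos.2 (by nlinarith)
  have hvc : 0 < v + c := by linarith
  set e : ℝ → ℝ := fun x => sigmoid x * exp (-(x ^ 2 / (2 * (v + c))))
  have he : Integrable e := integrable_sigmoid_mul (integrable_exp_neg_sq_div hvc)
  calc ∫ x, ∫ y, sigmoid x * sigmoid y * centeredBivariateGaussianPDF v c x y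
      ≤ (∫ x, (2 * π * r)⁻¹ * e x) * ∫ y, e y := by
        refine integral_integral_le_integral_mul_integral (fun x y => ?_) (fun x y => ?_)
          (he.const_mul _) he
        · have := sigmoid_nonneg x; have := sigmoid_nonneg y
          rw [centeredBivariateGaussianPDF]; positivity
        · have := sigmoid_nonneg x; have := sigmoid_nonneg y
          exact (mul_le_mul_of_nonneg_left (centeredBivariateGaussianPDF_le hc hcv x y)
            (by positivity)).trans_eq (by ring)
    _ = (v + c) / (4 * r) := by
        rw [integral_const_mul, integral_sigmoid_mul_exp_neg_sq_div hvc, mul_assoc,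
          div_mul_div_comm, mul_self_sqrt (by positivity)]
        field_simp
        ring

lemma add_div_four_sqrt_sq_sub_sq_sub_quarter_le {a b c : ℝ} (hc : 0 ≤ c) (hcb : c ≤ b)
    (hba : b < a) : (a + c) / (4 * √(a ^ 2 - c ^ 2)) - 1 / 4 ≤ c / (2 * (a - b)) := by
  have hD : 0 < a ^ 2 - c ^ 2 := by nlinarith
  set r := √(a ^ 2 - c ^ 2)
  have hr : 0 < r := sqrt_pos.2 hD
  have hr2 : r ^ 2 = a ^ 2 - c ^ 2 := sq_sqrt hD.le
  have hrge : a - c ≤ r := by nlinarith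
  have hab : 0 < a - b := by linarith
  rw [div_sub' (by positivity), div_le_div_iff₀ (by positivity) (by positivity)]
  nlinarith [mul_nonneg hc (sub_nonneg.2 hcb), mul_nonneg hc hab.le,
    mul_le_mul_of_nonneg_left hrge hc]

/-- Lemma 1 of the paper: for a centred bivariate Gaussian `(X,Y)` with common variance
`κ0` and covariance `κd`, `0 ≤ κd ≤ κ1 < κ0`, expressed via its explicit joint density,
`Cov(σ(X),σ(Y)) ≤ 2 κd E[σ(X)]² / (κ0 - κ1)`. -/
theorem sigmoid_covariance_gaussian_bound
    (σ : ℝ → ℝ) (hσ : ∀ x, σ x = (1 + Real.exp (-x))⁻¹)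
    (κ0 κ1 κd : ℝ) (hκd0 : 0 ≤ κd) (hκd1 : κd ≤ κ1) (hκ10 : κ1 < κ0)
    (f : ℝ → ℝ → ℝ)
    (hf : ∀ x y, f x y = (2 * π * Real.sqrt (κ0 ^ 2 - κd ^ 2))⁻¹ *
      Real.exp (-((κ0 * (x ^ 2 + y ^ 2) - 2 * κd * x * y) / (2 * (κ0 ^ 2 - κd ^ 2)))))
    (φ : ℝ → ℝ)
    (hφ : ∀ z, φ z = (Real.sqrt (2 * π * κ0))⁻¹ * Real.exp (-(z ^ 2 / (2 * κ0)))) :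
    (∫ x : ℝ, ∫ y : ℝ, σ x * σ y * f x y) - (∫ z : ℝ, σ z * φ z) ^ 2 ≤
      2 * κd * (∫ z : ℝ, σ z * φ z) ^ 2 / (κ0 - κ1) := by
  obtain rfl : σ = sigmoid := funext hσ
  obtain rfl : f = centeredBivariateGaussianPDF κ0 κd := funext fun x => funext (hf x)
  have hκd : κd < κ0 := hκd1.trans_lt hκ10
  have hκ0 : 0 < κ0 := hκd0.trans_lt hκd
  have mean : ∫ z, sigmoid z * φ z = 1 / 2 := by
    simp only [hφ, mul_left_comm (sigmoid _), integral_const_mul,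
      integral_sigmoid_mul_exp_neg_sq_div hκ0]
    field_simp [(sqrt_pos.2 (by positivity : 0 < 2 * π * κ0)).ne']
  have second_moment :=
    integral_integral_sigmoid_mul_sigmoid_mul_centeredBivariateGaussianPDF_le hκd0 hκd
  rw [mean]
  calc _ ≤ (κ0 + κd) / (4 * √(κ0 ^ 2 - κd ^ 2)) - 1 / 4 := by linarith
    _ ≤ κd / (2 * (κ0 - κ1)) := add_div_four_sqrt_sq_sub_sq_sub_quarter_le hκd0 hκd1 hκ10
    _ = _ := by rw [← div_div]; ring
end
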